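/- The group with presentation on four generators a₁, b₁, a₂, b₂ with the ten relators a₁a₂⁻¹, a₁[a₁,b₁]a₂, [a₁,b₁], [a₂,b₂], b₁b₂a₂b₂, b₁b₂a₂a₁⁻¹a₂b₂a₁, b₁b₂a₂a₁⁻¹b₂⁻¹a₂⁻¹a₁b₁⁻¹, b₂b₁a₁b₁, b₂b₁a₁a₂⁻¹a₁b₁a₂, and b₂b₁a₁a₂⁻¹b₁⁻¹a₁⁻¹a₂b₂⁻¹ is isomorphic to the cyclic group ℤ/3ℤ. -/

import Mathlib

/-!
In the presented group the relator a₁a₂⁻¹ identifies a₂ with a₁; the relators b₁b₂a₂b₂ and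
b₁b₂a₂a₁⁻¹a₂b₂a₁ then differ by a trailing a₁, so a₁ = 1. What is left of b₁b₂a₂b₂ and b₂b₁a₁b₁
says b₁b₂² = b₂b₁² = 1, whence b₂³ = 1 and b₁ = b₂. So the group is cyclic, generated by b₂ of
order dividing 3, and the homomorphism to ℤ/3 sending a₁, a₂ to 0 and b₁, b₂ to 1, which kills
all ten relators, is an isomorphism.
-/

namespace Stmt1

def a₁ : FreeGroup (Fin 4) := FreeGroup.of 0
def b₁ : FreeGroup (Fin 4) := FreeGroup.of 1
def a₂ : FreeGroup (Fin 4) := FreeGroup.of 2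
def b₂ : FreeGroup (Fin 4) := FreeGroup.of 3

def rels : Set (FreeGroup (Fin 4)) :=
  { a₁ * a₂⁻¹,
    a₁ * (a₁ * b₁ * a₁⁻¹ * b₁⁻¹) * a₂,
    a₁ * b₁ * a₁⁻¹ * b₁⁻¹,
    a₂ * b₂ * a₂⁻¹ * b₂⁻¹,
    b₁ * b₂ * a₂ * b₂,
    b₁ * b₂ * a₂ * a₁⁻¹ * a₂ * b₂ * a₁,
    b₁ * b₂ * a₂ * a₁⁻¹ * b₂⁻¹ * a₂⁻¹ * a₁ * b₁⁻¹,
    b₂ * b₁ * a₁ * b₁,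
    b₂ * b₁ * a₁ * a₂⁻¹ * a₁ * b₁ * a₂,
    b₂ * b₁ * a₁ * a₂⁻¹ * b₁⁻¹ * a₁⁻¹ * a₂ * b₂⁻¹ }

open PresentedGroup

section Cyclic

variable {G : Type*} [Group G] {n : ℕ} {g : G}

lemma map_zpow_of_map_eq_ofAdd_one {φ : G →* Multiplicative (ZMod n)}
    (hφ : φ g = Multiplicative.ofAdd 1) (k : ℤ) :
    φ (g ^ k) = Multiplicative.ofAdd (k : ZMod n) := by
  rw [map_zpow, hφ, ← ofAdd_zsmul, zsmul_one]

theorem bijective_of_map_eq_ofAdd_one (hgen : ∀ x : G, x ∈ Subgroup.zpowers g) (hg : g ^ n = 1)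
    {φ : G →* Multiplicative (ZMod n)} (hφ : φ g = Multiplicative.ofAdd 1) :
    Function.Bijective φ := by
  refine ⟨(injective_iff_map_eq_one φ).2 fun x hx => ?_, fun y => ?_⟩
  · obtain ⟨k, rfl⟩ := Subgroup.mem_zpowers_iff.1 (hgen x)
    rw [map_zpow_of_map_eq_ofAdd_one hφ, ofAdd_eq_one, ZMod.intCast_zmod_eq_zero_iff_dvd] at hx
    obtain ⟨m, rfl⟩ := hx
    rw [zpow_mul, zpow_natCast, hg, one_zpow]
  · obtain ⟨k, hk⟩ := ZMod.intCast_surjective (Multiplicative.toAdd y)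
    exact ⟨g ^ k, by rw [map_zpow_of_map_eq_ofAdd_one hφ, hk, ofAdd_toAdd]⟩

end Cyclic

local notation "A₁" => (of 0 : PresentedGroup rels)
local notation "B₁" => (of 1 : PresentedGroup rels)
local notation "A₂" => (of 2 : PresentedGroup rels)
local notation "B₂" => (of 3 : PresentedGroup rels)

lemma of_two_eq_of_zero : A₂ = A₁ := by
  have h : A₁ * A₂⁻¹ = 1 := one_of_mem (x := a₁ * a₂⁻¹) (by simp [rels])
  exact (mul_inv_eq_one.1 h).symm

lemma of_zero_eq_one : A₁ = 1 := by
  have h₅ : B₁ * B₂ * A₂ * B₂ = 1 := one_of_mem (x := b₁ * b₂ * a₂ * b₂) (by simp [rels])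
  have h₆ : B₁ * B₂ * A₂ * A₁⁻¹ * A₂ * B₂ * A₁ = 1 :=
    one_of_mem (x := b₁ * b₂ * a₂ * a₁⁻¹ * a₂ * b₂ * a₁) (by simp [rels])
  rw [of_two_eq_of_zero] at h₅ h₆
  rwa [inv_mul_cancel_right, h₅, one_mul] at h₆

lemma of_one_mul_of_three_sq : B₁ * B₂ ^ 2 = 1 := by
  have h : B₁ * B₂ * A₂ * B₂ = 1 := one_of_mem (x := b₁ * b₂ * a₂ * b₂) (by simp [rels])
  rwa [of_two_eq_of_zero, of_zero_eq_one, mul_one, mul_assoc, ← sq] at h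

lemma of_three_mul_of_one_sq : B₂ * B₁ ^ 2 = 1 := by
  have h : B₂ * B₁ * A₁ * B₁ = 1 := one_of_mem (x := b₂ * b₁ * a₁ * b₁) (by simp [rels])
  rwa [of_zero_eq_one, mul_one, mul_assoc, ← sq] at h

lemma of_one_eq_inv_of_three_sq : B₁ = (B₂ ^ 2)⁻¹ :=
  eq_inv_of_mul_eq_one_left of_one_mul_of_three_sq

lemma of_three_pow_three : B₂ ^ 3 = 1 :=
  calc B₂ ^ 3 = (B₂ * ((B₂ ^ 2)⁻¹) ^ 2)⁻¹ := by group
    _ = 1 := by rw [← of_one_eq_inv_of_three_sq, of_three_mul_of_one_sq, inv_one]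

lemma of_one_eq_of_three : B₁ = B₂ :=
  calc B₁ = B₂ * (B₂ ^ 3)⁻¹ := by rw [of_one_eq_inv_of_three_sq]; group
    _ = B₂ := by rw [of_three_pow_three, inv_one, mul_one]

lemma mem_zpowers_of_three (x : PresentedGroup rels) : x ∈ Subgroup.zpowers B₂ := by
  refine generated_by rels _ (fun j => ?_) x
  fin_cases j
  · simp [of_zero_eq_one]
  · simp [of_one_eq_of_three]
  · simp [of_two_eq_of_zero, of_zero_eq_one]
  · exact Subgroup.mem_zpowers _

def toZMod3 : PresentedGroup rels →* Multiplicative (ZMod 3) :=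
  toGroup (f := ![1, Multiplicative.ofAdd 1, 1, Multiplicative.ofAdd 1]) <| by
    simp only [rels, Set.mem_insert_iff, Set.mem_singleton_iff]
    rintro r (rfl | rfl | rfl | rfl | rfl | rfl | rfl | rfl | rfl | rfl) <;>
      simp [a₁, b₁, a₂, b₂] <;> decide

theorem pi1_X_theta :
    Nonempty (PresentedGroup rels ≃* Multiplicative (ZMod 3)) :=
  ⟨.ofBijective toZMod3 <| bijective_of_map_eq_ofAdd_one mem_zpowers_of_three of_three_pow_three
    (toGroup.of _)⟩

end Stmt1
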